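/- For the ideal I = (X_1, X_2)D of D and every nonzero y ∈ K, if IM ⊆ yM then I ⊆ yM. -/

import Mathlib

/-!
`D` is a local unique factorization domain in which `X₁, X₂ ∈ M` are coprime.
If `X₁X₁` and `X₁X₂` lie in `yD`, then the reduced denominator of `z = X₁/y`
divides both `X₁` and `X₂`, so `z ∈ D`. If `z` were a unit, `y` would be associated
to `X₁` and `X₂X₂ ∈ yD` would give `X₁ ∣ X₂²`. Hence `z ∈ M`, i.e. `X₁ ∈ yM`,
and symmetrically `X₂ ∈ yM`.
-/

open MvPolynomial FractionalIdeal

noncomputable section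

variable (k : Type*) [Field k]

/-- The ideal `N = (X_1, X_2, ...)` of `R = k[X_1, X_2, ...]` generated by all the
indeterminates. -/
def bigN : Ideal (MvPolynomial ℕ k) := Ideal.span (Set.range MvPolynomial.X)

theorem bigN_eq_ker : bigN k = RingHom.ker (constantCoeff (σ := ℕ) (R := k)) := by
  ext p
  rw [bigN, ← Set.image_univ, mem_ideal_span_X_image, RingHom.mem_ker]
  constructor
  · intro h
    rw [constantCoeff_eq]
    by_contra hc
    obtain ⟨i, _, hi⟩ := h 0 (mem_support_iff.mpr hc)
    simp at hi
  · intro h m hm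
    rw [constantCoeff_eq] at h
    have hm0 : m ≠ 0 := by rintro rfl; exact mem_support_iff.mp hm h
    obtain ⟨i, hi⟩ := Finsupp.ne_iff.mp hm0
    exact ⟨i, trivial, by simpa using hi⟩

instance : (bigN k).IsMaximal := by
  rw [bigN_eq_ker]
  exact RingHom.ker_isMaximal_of_surjective _ (fun a => ⟨C a, by simp⟩)

/-- `D`, the localization of `k[X_1, X_2, ...]` at the maximal ideal `N`. -/
abbrev bigD := Localization.AtPrime (bigN k)

/-- `K`, the fraction field of `D`. -/
abbrev bigK := FractionRing (bigD k)

/-- `M`, the maximal ideal of the local domain `D`. -/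
def bigM : Ideal (bigD k) := IsLocalRing.maximalIdeal (bigD k)

/-- The maximal ideal `M` of `D`, viewed as a fractional ideal of `D`. -/
def bigMF : FractionalIdeal (nonZeroDivisors (bigD k)) (bigK k) :=
  ((bigM k : Ideal (bigD k)) : FractionalIdeal (nonZeroDivisors (bigD k)) (bigK k))

/-- The ideal `I = (X_1, X_2)D` of `D`. -/
def IXY : Ideal (bigD k) :=
  Ideal.span {algebraMap (MvPolynomial ℕ k) (bigD k) (X 1),
    algebraMap (MvPolynomial ℕ k) (bigD k) (X 2)}

open IsLocalization IsFractionRing IsLocalRing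

section FractionRing

variable {R K : Type*} [CommRing R] [IsDomain R] [UniqueFactorizationMonoid R]
  [Field K] [Algebra R K] [IsFractionRing R K]

theorem IsFractionRing.den_dvd_of_isInteger_mul {x : K} {a : R}
    (h : IsInteger R (x * algebraMap R K a)) : (den R x : R) ∣ a := by
  obtain ⟨r, hr⟩ := h
  refine (num_den_reduced R x).symm.dvd_of_dvd_mul_left
    ⟨r, FaithfulSMul.algebraMap_injective R K ?_⟩
  rw [map_mul, map_mul, hr, ← num_mul_den_eq_num_iff_eq.2 rfl]
  ring

theorem IsFractionRing.isInteger_of_isRelPrime {a b : R} (hab : IsRelPrime a b) {x : K}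
    (ha : IsInteger R (x * algebraMap R K a)) (hb : IsInteger R (x * algebraMap R K b)) :
    IsInteger R x :=
  isInteger_of_isUnit_den (hab (den_dvd_of_isInteger_mul ha) (den_dvd_of_isInteger_mul hb))

end FractionRing

theorem IsLocalization.mem_span_singleton_mul_coeSubmodule {R S : Type*} [CommRing R]
    [CommRing S] [Algebra R S] {J : Ideal R} {x y : S} :
    x ∈ Submodule.span R {y} * coeSubmodule S J ↔ ∃ m ∈ J, y * algebraMap R S m = x := by
  simp [Submodule.mem_span_singleton_mul]

section LocalRing

variable {R K : Type*} [CommRing R] [IsDomain R] [UniqueFactorizationMonoid R] [IsLocalRing R]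
  [Field K] [Algebra R K] [IsFractionRing R K]
  {a b : R} {y : K}

theorem algebraMap_mem_span_singleton_mul_maximalIdeal (hab : IsRelPrime a b)
    (ha : a ∈ maximalIdeal R) (hb : b ∈ maximalIdeal R) (hy : y ≠ 0)
    (h : coeSubmodule K (Ideal.span {a, b} * maximalIdeal R) ≤
      Submodule.span R {y} * coeSubmodule K (maximalIdeal R)) :
    algebraMap R K a ∈ Submodule.span R {y} * coeSubmodule K (maximalIdeal R) := by
  have divides {c d : R} (hc : c ∈ Ideal.span {a, b}) (hd : d ∈ maximalIdeal R) :
      ∃ m ∈ maximalIdeal R, y * algebraMap R K m = algebraMap R K (c * d) :=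
    mem_span_singleton_mul_coeSubmodule.1 <|
      h <| (mem_coeSubmodule _ _).2 ⟨_, Ideal.mul_mem_mul hc hd, rfl⟩
  have ha' : a ∈ Ideal.span {a, b} := Ideal.subset_span (by simp)
  have hb' : b ∈ Ideal.span {a, b} := Ideal.subset_span (by simp)
  obtain ⟨maa, -, hmaa⟩ := divides ha' ha
  obtain ⟨mab, -, hmab⟩ := divides ha' hb
  obtain ⟨mbb, -, hmbb⟩ := divides hb' hb
  obtain ⟨d, hd⟩ : IsInteger R (y⁻¹ * algebraMap R K a) :=
    isInteger_of_isRelPrime hab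
      ⟨maa, by rw [mul_assoc, ← map_mul, ← hmaa, inv_mul_cancel_left₀ hy]⟩
      ⟨mab, by rw [mul_assoc, ← map_mul, ← hmab, inv_mul_cancel_left₀ hy]⟩
  have hay : algebraMap R K a = y * algebraMap R K d := by rw [hd, mul_inv_cancel_left₀ hy]
  refine mem_span_singleton_mul_coeSubmodule.2 ⟨d, ?_, hay.symm⟩
  by_contra hdM
  obtain ⟨u, rfl⟩ : IsUnit d := by simpa using hdM
  -- `y` is associated to `a`, so `b * b ∈ y • R` forces `a ∣ b * b`.
  have hu : algebraMap R K u ≠ 0 := (u.isUnit.map _).ne_zero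
  have hab2 : a ∣ b * b := ⟨↑u⁻¹ * mbb, FaithfulSMul.algebraMap_injective R K <| by
    rw [← hmbb, map_mul, map_mul, map_units_inv, hay]
    field_simp⟩
  exact (mem_maximalIdeal _).1 ha ((hab.mul_right hab) dvd_rfl hab2)

theorem coeSubmodule_span_pair_le_of_mul_maximalIdeal_le (hab : IsRelPrime a b)
    (ha : a ∈ maximalIdeal R) (hb : b ∈ maximalIdeal R) (hy : y ≠ 0)
    (h : coeSubmodule K (Ideal.span {a, b} * maximalIdeal R) ≤
      Submodule.span R {y} * coeSubmodule K (maximalIdeal R)) :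
    coeSubmodule K (Ideal.span {a, b}) ≤
      Submodule.span R {y} * coeSubmodule K (maximalIdeal R) := by
  rw [coeSubmodule_span, Submodule.span_le, Set.image_pair, Set.insert_subset_iff,
    Set.singleton_subset_iff]
  exact ⟨algebraMap_mem_span_singleton_mul_maximalIdeal hab ha hb hy h,
    algebraMap_mem_span_singleton_mul_maximalIdeal hab.symm hb ha hy
      (by rwa [Set.pair_comm] at h)⟩

end LocalRing

section Localization

variable {R : Type*} (S : Type*) [CommRing R] [CommRing S] [Algebra R S] {M : Submonoid R}
  [IsLocalization M S] {p : R}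

theorem IsLocalization.algebraMap_dvd_algebraMap_iff_of_prime (hp : Prime p)
    (hd : Disjoint (M : Set R) (Ideal.span {p})) (q : R) :
    algebraMap R S p ∣ algebraMap R S q ↔ p ∣ q := by
  rw [← Ideal.mem_span_singleton, ← Ideal.mem_span_singleton, ← Set.image_singleton,
    ← Ideal.map_span, ← Ideal.mem_comap, ← Ideal.under_def,
    under_map_of_isPrime_disjoint M S ((Ideal.span_singleton_prime hp.ne_zero).2 hp) hd]

theorem IsLocalization.prime_algebraMap [IsDomain R] (hp : Prime p)
    (hd : Disjoint (M : Set R) (Ideal.span {p})) : Prime (algebraMap R S p) := by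
  have hM : M ≤ nonZeroDivisors R := le_nonZeroDivisors_of_noZeroDivisors fun h0 =>
    Set.disjoint_left.1 hd h0 (Ideal.zero_mem _)
  have hp0 : algebraMap R S p ≠ 0 :=
    (map_ne_zero_iff _ (IsLocalization.injective S hM)).2 hp.ne_zero
  have hP := isPrime_of_isPrime_disjoint M S _ ((Ideal.span_singleton_prime hp.ne_zero).2 hp) hd
  rwa [Ideal.map_span, Set.image_singleton, Ideal.span_singleton_prime hp0] at hP

end Localization

/- Mathlib makes `bigK k` a `bigD k`-algebra through `IsLocalization.lift` rather than as the
Ore localization of `bigD k`; the two structures agree. -/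
instance : IsFractionRing (bigD k) (bigK k) := by
  convert Localization.isLocalization (M := nonZeroDivisors (bigD k)) using 1
  refine Algebra.algebra_ext _ _ fun r => RingHom.congr_fun
    (IsLocalization.ringHom_ext (bigN k).primeCompl (RingHom.ext fun x => ?_)) r
  simp only [RingHom.comp_apply, RingHom.algebraMap_toAlgebra, IsLocalization.lift_eq]
  rfl

theorem disjoint_primeCompl_span_X (i : ℕ) :
    Disjoint ((bigN k).primeCompl : Set (MvPolynomial ℕ k))
      ↑(Ideal.span {(X i : MvPolynomial ℕ k)}) :=
  Set.disjoint_compl_left_iff_subset.2 <|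
    (Ideal.span_singleton_le_iff_mem _).2 (Ideal.subset_span ⟨i, rfl⟩)

theorem prime_algebraMap_X (i : ℕ) :
    Prime (algebraMap (MvPolynomial ℕ k) (bigD k) (X i)) :=
  prime_algebraMap _ (X_prime (i := i)) (disjoint_primeCompl_span_X k i)

theorem algebraMap_X_dvd_algebraMap_X_iff {i j : ℕ} :
    algebraMap (MvPolynomial ℕ k) (bigD k) (X i) ∣
      algebraMap (MvPolynomial ℕ k) (bigD k) (X j) ↔ i = j := by
  rw [algebraMap_dvd_algebraMap_iff_of_prime _ (X_prime (i := i))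
    (disjoint_primeCompl_span_X k i), X_dvd_X]

theorem algebraMap_X_mem_bigM (i : ℕ) :
    algebraMap (MvPolynomial ℕ k) (bigD k) (X i) ∈ bigM k :=
  (mem_maximalIdeal _).2 (prime_algebraMap_X k i).not_isUnit

theorem isRelPrime_algebraMap_X_one_X_two :
    IsRelPrime (algebraMap (MvPolynomial ℕ k) (bigD k) (X 1))
      (algebraMap (MvPolynomial ℕ k) (bigD k) (X 2)) :=
  (prime_algebraMap_X k 1).irreducible.isRelPrime_iff_not_dvd.2 <| by
    rw [algebraMap_X_dvd_algebraMap_X_iff]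
    decide

/-- For `I = (X_1, X_2)D` and every nonzero `y ∈ K`: if `IM ⊆ yM` then `I ⊆ yM`. -/
theorem I_le_of_IM_le (y : bigK k) (hy : y ≠ 0)
    (h : (((IXY k * bigM k : Ideal (bigD k)) :
          FractionalIdeal (nonZeroDivisors (bigD k)) (bigK k)) :
            @Submodule (bigD k) (bigK k) _ _ Algebra.toModule) ≤
        @Submodule.span (bigD k) (bigK k) _ _ Algebra.toModule {y} * (bigMF k : @Submodule (bigD k) (bigK k) _ _ Algebra.toModule)) :
    (((IXY k : Ideal (bigD k)) : FractionalIdeal (nonZeroDivisors (bigD k)) (bigK k)) :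
        @Submodule (bigD k) (bigK k) _ _ Algebra.toModule) ≤
      @Submodule.span (bigD k) (bigK k) _ _ Algebra.toModule {y} * (bigMF k : @Submodule (bigD k) (bigK k) _ _ Algebra.toModule) := by
  simp only [bigMF, FractionalIdeal.coe_coeIdeal] at h ⊢
  exact coeSubmodule_span_pair_le_of_mul_maximalIdeal_le (isRelPrime_algebraMap_X_one_X_two k)
    (algebraMap_X_mem_bigM k 1) (algebraMap_X_mem_bigM k 2) hy h
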